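/- arXiv:2412.04281 — 7 statements merged into one kernel-verified Lean document; each statement's English description precedes it below -/
import Mathlib

section
/- Let X be a set, let σ ⊆ θ be finite subsets of X, and let g, h be permutations of X such that for every x ∈ σ: if g x ∈ θ then h x = g x, and if g x ∉ θ then h x ∉ θ. Then there exists a permutation g' of X with g' x = g x for all x ∈ σ and such that for every x ∈ X, if g' x ∈ θ then h x = g' x. (Equivalently, g' lies in the right coset g·St_σ and h lies in St_θ·g', where St_σ and St_θ are the pointwise stabilizers of σ and θ in the permutation group of X.) -/
/-- Let `σ ⊆ θ` be finite subsets of a set `X` and `g, h` permutations of `X` such that for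
every `x ∈ σ`: if `g x ∈ θ` then `h x = g x`, and if `g x ∉ θ` then `h x ∉ θ`.  Then there
is a permutation `g'` of `X` agreeing with `g` on `σ` and such that `h x = g' x` whenever
`g' x ∈ θ`  (i.e. `g' ∈ g·St_σ` and `h ∈ St_θ·g'`). -/
theorem stmt7 {X : Type*} (σ θ : Finset X) (hσθ : σ ⊆ θ) (g h : Equiv.Perm X)
    (hyp : ∀ x ∈ σ, (g x ∈ θ → h x = g x) ∧ (g x ∉ θ → h x ∉ θ)) :
    ∃ g' : Equiv.Perm X, (∀ x ∈ σ, g' x = g x) ∧ ∀ x : X, g' x ∈ θ → h x = g' x := by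
  classical
  -- `k = h⁻¹ ∘ g`
  set k : Equiv.Perm X := g.trans h.symm with hk
  have hkx : ∀ x, h (k x) = g x := fun x => h.apply_symm_apply (g x)
  -- `B` is the "bad" part of `σ`
  set B : Finset X := σ.filter (fun x => g x ∉ θ) with hB
  set B' : Finset X := B.image k with hB'
  set F : Finset X := B ∪ B' with hF
  -- every element of `F` is mapped outside `θ` by `h`
  have hFC : ∀ x ∈ F, h x ∉ θ := by
    intro x hx
    rcases Finset.mem_union.mp hx with hx | hx
    · rcases Finset.mem_filter.mp hx with ⟨hxσ, hxθ⟩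
      exact (hyp x hxσ).2 hxθ
    · rcases Finset.mem_image.mp hx with ⟨y, hy, rfl⟩
      rcases Finset.mem_filter.mp hy with ⟨_, hyθ⟩
      rw [hkx]; exact hyθ
  -- the equivalence between the two subtypes of `↥F`
  have hBF : ∀ x ∈ B, x ∈ F := fun x hx => Finset.mem_union_left _ hx
  have hB'F : ∀ x ∈ B', x ∈ F := fun x hx => Finset.mem_union_right _ hx
  let φ : {y : {x // x ∈ F} // (y : X) ∈ B} → {y : {x // x ∈ F} // (y : X) ∈ B'} :=
    fun y => ⟨⟨k y, hB'F _ (Finset.mem_image_of_mem k y.2)⟩,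
      Finset.mem_image_of_mem k y.2⟩
  have hφbij : Function.Bijective φ := by
    constructor
    · intro a b hab
      have h1 : k ((a : {x // x ∈ F}) : X) = k ((b : {x // x ∈ F}) : X) :=
        congrArg (fun z : {y : {x // x ∈ F} // (y : X) ∈ B'} => ((z : {x // x ∈ F}) : X)) hab
      exact Subtype.ext (Subtype.ext (k.injective h1))
    · rintro ⟨⟨y, hyF⟩, hyB'⟩
      rcases Finset.mem_image.mp hyB' with ⟨x, hxB, rfl⟩
      exact ⟨⟨⟨x, hBF _ hxB⟩, hxB⟩, rfl⟩
  let e := Equiv.ofBijective φ hφbij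
  -- the permutation of `↥F`
  let π : Equiv.Perm {x // x ∈ F} := Equiv.extendSubtype e
  -- extend to a permutation of `X` fixing the complement of `F`
  let s : Equiv.Perm X := π.extendDomain (Equiv.refl {x // x ∈ F})
  have hs_notF : ∀ x, x ∉ F → s x = x := fun x hx =>
    Equiv.Perm.extendDomain_apply_not_subtype π (Equiv.refl _) hx
  have hs_F : ∀ x (hx : x ∈ F), s x = (π ⟨x, hx⟩ : X) := by
    intro x hx
    simpa using Equiv.Perm.extendDomain_apply_subtype π (Equiv.refl _) hx
  have hs_B : ∀ x (hx : x ∈ B), s x = k x := by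
    intro x hx
    rw [hs_F x (hBF _ hx)]
    rw [Equiv.extendSubtype_apply_of_mem e ⟨x, hBF _ hx⟩ hx]
    rfl
  -- `s` maps `F` into `F`
  have hs_memF : ∀ x, x ∈ F → s x ∈ F := by
    intro x hx
    rw [hs_F x hx]
    exact (π ⟨x, hx⟩).2
  refine ⟨s.trans h, ?_, ?_⟩
  · intro x hxσ
    by_cases hxB : x ∈ B
    · simp only [Equiv.trans_apply]
      rw [hs_B x hxB, hkx]
    · have hgθ : g x ∈ θ := by
        by_contra hgθ
        exact hxB (Finset.mem_filter.mpr ⟨hxσ, hgθ⟩)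
      have hhx : h x = g x := (hyp x hxσ).1 hgθ
      have hxF : x ∉ F := by
        intro hxF
        exact hFC x hxF (hhx ▸ hgθ)
      simp only [Equiv.trans_apply]
      rw [hs_notF x hxF, hhx]
  · intro x hxθ
    simp only [Equiv.trans_apply] at hxθ ⊢
    have hsx : s x = x := by
      by_contra hne
      have hxF : x ∈ F := by
        by_contra hxF
        exact hne (hs_notF x hxF)
      exact hFC (s x) (hs_memF x hxF) hxθ
    rw [hsx] at hxθ ⊢
end

section
/- Let X be a set. For every finite subset σ of X there exists a finite set F of permutations of X such that every permutation g of X can be written as g = u ∘ f ∘ v with f ∈ F and u, v permutations of X fixing σ pointwise. Consequently, the permutation group S(X), equipped with the topology of pointwise convergence, is Roelcke precompact. -/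
/-!
The double coset `St_σ g St_σ` is determined by the partial restriction of `g` to `σ`, the
map `y ↦ g y` from `σ ∩ g⁻¹ σ` to `σ`, of which there are finitely many. If `f` and `g` have
the same partial restriction, the map that is the identity on `σ` and `f⁻¹ g` on `g⁻¹ σ` is a
well-defined injection of the finite set `σ ∪ g⁻¹ σ`, hence extends to a permutation `v`;
then `v` fixes `σ`, `u = g v⁻¹ f⁻¹` fixes `σ` as well, and `g = u f v`.
-/

open Equiv

theorem exists_finset_forall_exists_apply_eq {α β : Type*} [Finite β] (P : α → β) :
    ∃ F : Finset α, ∀ a, ∃ f ∈ F, P f = P a := by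
  classical
  have : Fintype (Set.range P) := Fintype.ofFinite _
  exact ⟨Finset.univ.image fun b : Set.range P => b.2.choose,
    fun a => ⟨_, Finset.mem_image_of_mem _ (Finset.mem_univ ⟨P a, a, rfl⟩),
      (⟨P a, a, rfl⟩ : Set.range P).2.choose_spec⟩⟩

namespace Equiv.Perm

variable {X : Type*}

theorem exists_eqOn_of_injOn {s : Set X} {J : X → X} (hs : s.Finite) (hJ : s.InjOn J) :
    ∃ v : Perm X, s.EqOn v J := by
  have hv : ∃ v : Perm X, ∀ x : s, v x = J x := by
    rcases finite_or_infinite X with _ | _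
    · exact Cardinal.extend_function_finite ⟨_, hJ.injective⟩ ⟨Equiv.refl X⟩
    · exact Cardinal.extend_function_of_lt ⟨_, hJ.injective⟩
        (hs.lt_aleph0.trans_le (Cardinal.aleph0_le_mk X)) ⟨Equiv.refl X⟩
  obtain ⟨v, hv⟩ := hv
  exact ⟨v, fun x hx => hv ⟨x, hx⟩⟩

/-- `none` marks the points of `σ` that `g` moves out of `σ`. -/
def partialRestrict [DecidableEq X] (σ : Finset X) (g : Perm X) : σ → Option σ :=
  fun y => if h : g y ∈ σ then some ⟨g y, h⟩ else none

variable {σ : Finset X} {f g : Perm X}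

theorem partialRestrict_eq_iff [DecidableEq X] :
    partialRestrict σ f = partialRestrict σ g ↔ ∀ y ∈ σ, g y ∈ σ ∨ f y ∈ σ → f y = g y := by
  simp only [funext_iff, partialRestrict, Subtype.forall]
  refine forall₂_congr fun y _ => ?_
  by_cases hf : f y ∈ σ <;> by_cases hg : g y ∈ σ <;> aesop

theorem exists_fixing_apply_inv_eq (hfg : ∀ y ∈ σ, g y ∈ σ ∨ f y ∈ σ → f y = g y) :
    ∃ v : Perm X, (∀ x ∈ σ, v x = x) ∧ ∀ x ∈ σ, v (g⁻¹ x) = f⁻¹ x := by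
  classical
  set J : X → X := fun x => if x ∈ σ then x else f⁻¹ (g x)
  have hcross : ∀ a ∈ σ, ∀ b, g b ∈ σ → a = f⁻¹ (g b) → a = b := by
    intro a ha b hb hab
    have hfa : f a = g b := by simp [hab]
    exact g.injective ((hfg a ha (Or.inr (hfa ▸ hb))).symm.trans hfa)
  have hinj : Set.InjOn J (σ ∪ g ⁻¹' σ) := by
    intro a ha b hb hab
    by_cases ha' : a ∈ σ <;> by_cases hb' : b ∈ σ <;>
      simp only [J, ha', hb', if_true, if_false] at hab
    · exact hab
    · exact hcross a ha' b (hb.resolve_left hb') hab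
    · exact (hcross b hb' a (ha.resolve_left ha') hab.symm).symm
    · exact g.injective (f⁻¹.injective hab)
  obtain ⟨v, hv⟩ := exists_eqOn_of_injOn
    (σ.finite_toSet.union (σ.finite_toSet.preimage g.injective.injOn)) hinj
  refine ⟨v, fun x hx => (hv (Or.inl hx)).trans (if_pos hx), fun x hx => ?_⟩
  rw [hv (Or.inr (by simpa using hx))]
  by_cases hgx : g⁻¹ x ∈ σ
  · simp only [J, if_pos hgx, eq_inv_iff_eq]
    simpa using hfg _ hgx (Or.inl (by simpa using hx))
  · simp only [J, if_neg hgx]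
    simp

theorem exists_eq_mul_mul_of_partialRestrict_eq [DecidableEq X]
    (h : partialRestrict σ f = partialRestrict σ g) :
    ∃ u v : Perm X, (∀ x ∈ σ, u x = x) ∧ (∀ x ∈ σ, v x = x) ∧ g = u * f * v := by
  obtain ⟨v, hvσ, hv⟩ := exists_fixing_apply_inv_eq (partialRestrict_eq_iff.mp h)
  refine ⟨g * v⁻¹ * f⁻¹, v, fun x hx => ?_, hvσ, by group⟩
  rw [mul_apply, mul_apply, ← hv x hx]
  simp

end Equiv.Perm

/-- For every finite subset `σ` of a set `X` there is a finite set `F` of permutations of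
`X` such that every permutation `g` of `X` can be written as `g = u ∘ f ∘ v` with `f ∈ F`
and `u, v` permutations fixing `σ` pointwise.  Consequently the permutation group `S(X)`
with the topology of pointwise convergence is Roelcke precompact. -/
theorem stmt8 {X : Type*} (σ : Finset X) :
    ∃ F : Finset (Equiv.Perm X), ∀ g : Equiv.Perm X, ∃ f ∈ F, ∃ u v : Equiv.Perm X,
      (∀ x ∈ σ, u x = x) ∧ (∀ x ∈ σ, v x = x) ∧ g = u * f * v := by
  classical
  obtain ⟨F, hF⟩ := exists_finset_forall_exists_apply_eq (Perm.partialRestrict σ)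
  refine ⟨F, fun g => ?_⟩
  obtain ⟨f, hfF, hfg⟩ := hF g
  exact ⟨f, hfF, Perm.exists_eq_mul_mul_of_partialRestrict_eq hfg⟩
end

section
/- Let X be an infinite set with the discrete topology, let OnePoint X = X ∪ {∞} be its one-point compactification, and endow the set of self-maps OnePoint X → OnePoint X with the product (pointwise convergence) topology. Let E be the set of all extensions of permutations of X to OnePoint X fixing ∞ (i.e. the maps OnePoint.map g for g a permutation of X). Then the closure of E equals the set of all maps f : OnePoint X → OnePoint X such that f(∞) = ∞ and f is injective on {x ∈ X : f x ≠ ∞} (i.e., for all x ≠ y in X with f x ≠ ∞ and f y ≠ ∞ one has f x ≠ f y). -/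
open OnePoint Topology Filter

/-- Any injection defined on a finite subset of an infinite type extends to a permutation. -/
lemma exists_perm_extend_aux {X : Type*} [Infinite X] {s : Set X} (hs : s.Finite)
    {σ : X → X} (hσ : Set.InjOn σ s) : ∃ g : Equiv.Perm X, ∀ x ∈ s, g x = σ x := by
  have hlt : Cardinal.mk s < Cardinal.mk X :=
    lt_of_lt_of_le hs.lt_aleph0 (Cardinal.infinite_iff.mp ‹Infinite X›)
  obtain ⟨g, hg⟩ := Cardinal.extend_function_of_lt
    (⟨fun x : s => σ x, fun a b h => Subtype.ext (hσ a.2 b.2 h)⟩ : s ↪ X) hlt ⟨Equiv.refl X⟩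
  exact ⟨g, fun x hx => hg ⟨x, hx⟩⟩

/-- Let `X` be an infinite discrete space and endow the self-maps of the one-point
compactification `OnePoint X` with the product (pointwise convergence) topology.  The
closure of the set of extensions of permutations of `X` (fixing `∞`) is exactly the set of
maps `f` with `f ∞ = ∞` that are injective on `{x ∈ X | f x ≠ ∞}`. -/
theorem stmt9 {X : Type*} [TopologicalSpace X] [DiscreteTopology X] [Infinite X] :
    closure {f : OnePoint X → OnePoint X | ∃ g : Equiv.Perm X, f = OnePoint.map ⇑g} =
      {f : OnePoint X → OnePoint X | f ∞ = ∞ ∧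
        ∀ x y : X, x ≠ y → f ↑x ≠ ∞ → f ↑y ≠ ∞ → f ↑x ≠ f ↑y} := by
  classical
  apply Set.Subset.antisymm
  · apply closure_minimal
    · rintro f ⟨g, rfl⟩
      refine ⟨rfl, fun x y hxy _ _ h => ?_⟩
      simp only [OnePoint.map_some, OnePoint.coe_eq_coe] at h
      exact hxy (g.injective h)
    · have hrw : {f : OnePoint X → OnePoint X | f ∞ = ∞ ∧
          ∀ x y : X, x ≠ y → f ↑x ≠ ∞ → f ↑y ≠ ∞ → f ↑x ≠ f ↑y} =
          ((fun f : OnePoint X → OnePoint X => f ∞) ⁻¹' {∞}) ∩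
          ⋂ (x : X) (y : X) (_ : x ≠ y),
            {f : OnePoint X → OnePoint X | f ↑x ≠ ∞ → f ↑y ≠ ∞ → f ↑x ≠ f ↑y} := by
        ext f
        simp [Set.mem_iInter, Set.mem_setOf_eq]
      rw [hrw]
      refine IsClosed.inter (OnePoint.isClosed_infty.preimage (continuous_apply _)) ?_
      refine isClosed_iInter fun x => isClosed_iInter fun y => isClosed_iInter fun hxy => ?_
      rw [← isOpen_compl_iff]
      have hrw2 : {f : OnePoint X → OnePoint X | f ↑x ≠ ∞ → f ↑y ≠ ∞ → f ↑x ≠ f ↑y}ᶜ =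
          ⋃ a : X, ((fun f : OnePoint X → OnePoint X => f ↑x) ⁻¹' {↑a}) ∩
            ((fun f : OnePoint X → OnePoint X => f ↑y) ⁻¹' {↑a}) := by
        ext f
        simp only [Set.mem_compl_iff, Set.mem_setOf_eq, not_forall, Classical.not_imp, not_not,
          Set.mem_iUnion, Set.mem_inter_iff, Set.mem_preimage, Set.mem_singleton_iff]
        constructor
        · rintro ⟨hx, hy, h⟩
          obtain ⟨a, ha⟩ := OnePoint.ne_infty_iff_exists.mp hx
          exact ⟨a, ha.symm, by rw [← h, ha]⟩
        · rintro ⟨a, ha, hb⟩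
          rw [ha, hb]
          exact ⟨OnePoint.coe_ne_infty a, OnePoint.coe_ne_infty a, rfl⟩
      rw [hrw2]
      refine isOpen_iUnion fun a => IsOpen.inter ?_ ?_ <;>
        exact IsOpen.preimage (continuous_apply _)
          (by simpa using OnePoint.isOpenMap_coe {a} (isOpen_discrete {a}))
  · rintro f ⟨hf0, hinj⟩
    rw [mem_closure_iff_nhds]
    intro U hU
    rw [nhds_pi, Filter.mem_pi'] at hU
    obtain ⟨I, t, ht, hIt⟩ := hU
    set s : Set X := {x : X | (x : OnePoint X) ∈ I} with hs_def
    have hsfin : s.Finite :=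
      Set.Finite.preimage OnePoint.coe_injective.injOn I.finite_toSet
    set B : Set X := {x ∈ s | f ↑x = ∞} with hB_def
    have hBfin : B.Finite := hsfin.subset fun x hx => hx.1
    -- for `x ∈ B`, the set of coordinates avoiding `t ↑x` is finite
    have hgood : ∀ x ∈ B, ({y : X | (y : OnePoint X) ∈ t ↑x}ᶜ : Set X).Finite := by
      intro x hx
      have h1 : t ↑x ∈ 𝓝 (∞ : OnePoint X) := hx.2 ▸ ht ↑x
      have h2 : ((↑) : X → OnePoint X) ⁻¹' (t ↑x) ∈ Filter.cofinite := by
        rw [← cocompact_eq_cofinite X, ← Filter.coclosedCompact_eq_cocompact,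
          ← OnePoint.comap_coe_nhds_infty]
        exact Filter.preimage_mem_comap h1
      exact h2
    -- values of `f` on `s`
    set vA : Set X := ((↑) : X → OnePoint X) ⁻¹' ((fun x : X => f ↑x) '' s) with hvA_def
    have hvAfin : vA.Finite :=
      Set.Finite.preimage OnePoint.coe_injective.injOn (hsfin.image _)
    set G : Set X := (⋂ x ∈ B, {y : X | (y : OnePoint X) ∈ t ↑x}) \ vA with hG_def
    have hGinf : G.Infinite := by
      have hcfin : Gᶜ.Finite := by
        have : Gᶜ = (⋃ x ∈ B, ({y : X | (y : OnePoint X) ∈ t ↑x}ᶜ : Set X)) ∪ vA := by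
          rw [hG_def, Set.diff_eq, Set.compl_inter, compl_compl, Set.compl_iInter]
          simp [Set.compl_iInter, Set.union_comm]
        rw [this]
        exact ((hBfin.biUnion hgood).union hvAfin)
      have := hcfin.infinite_compl
      rwa [compl_compl] at this
    obtain ⟨e, he⟩ := Set.countable_iff_exists_injective.mp hBfin.countable
    set emb : ℕ ↪ G := hGinf.natEmbedding
    set σ : X → X := fun x =>
      if h : x ∈ B then (emb (e ⟨x, h⟩) : X) else (f ↑x).elim x id with hσ_def
    have hσB : ∀ x (h : x ∈ B), σ x = (emb (e ⟨x, h⟩) : X) := by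
      intro x h; simp [hσ_def, h]
    have hσBmem : ∀ x ∈ B, σ x ∈ G := by
      intro x h; rw [hσB x h]; exact (emb (e ⟨x, h⟩)).2
    have hσA : ∀ x ∈ s, x ∉ B → (f ↑x ≠ ∞) ∧ (f ↑x = ↑(σ x)) := by
      intro x hxs hxB
      have hne : f ↑x ≠ ∞ := fun h => hxB ⟨hxs, h⟩
      obtain ⟨a, ha⟩ := OnePoint.ne_infty_iff_exists.mp hne
      refine ⟨hne, ?_⟩
      rw [hσ_def]
      simp only [dif_neg hxB]
      rw [← ha]
      rfl
    have hσAvA : ∀ x ∈ s, x ∉ B → σ x ∈ vA := by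
      intro x hxs hxB
      exact ⟨x, hxs, (hσA x hxs hxB).2⟩
    have hσinj : Set.InjOn σ s := by
      intro x hx y hy hxy
      by_cases hxB : x ∈ B <;> by_cases hyB : y ∈ B
      · rw [hσB x hxB, hσB y hyB] at hxy
        have := emb.injective (Subtype.ext hxy)
        have := he this
        exact congrArg Subtype.val this
      · have h1 : σ x ∉ vA := (hσBmem x hxB).2
        rw [hxy] at h1
        exact absurd (hσAvA y hy hyB) h1
      · have h1 : σ y ∉ vA := (hσBmem y hyB).2
        rw [← hxy] at h1
        exact absurd (hσAvA x hx hxB) h1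
      · by_contra hne
        obtain ⟨hxne, hxa⟩ := hσA x hx hxB
        obtain ⟨hyne, hya⟩ := hσA y hy hyB
        exact hinj x y hne hxne hyne (by rw [hxa, hya, hxy])
    obtain ⟨g, hg⟩ := exists_perm_extend_aux hsfin hσinj
    refine ⟨OnePoint.map ⇑g, hIt ?_, g, rfl⟩
    intro i hi
    induction i using OnePoint.rec with
    | infty =>
      have := mem_of_mem_nhds (ht ∞)
      rwa [hf0] at this
      -- goal: map g ∞ ∈ t ∞
    | coe x =>
      have hxs : x ∈ s := hi
      rw [show OnePoint.map ⇑g ↑x = ↑(g x) from rfl, hg x hxs]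
      by_cases hxB : x ∈ B
      · have hmem : σ x ∈ G := hσBmem x hxB
        have : σ x ∈ ⋂ x ∈ B, {y : X | (y : OnePoint X) ∈ t ↑x} := hmem.1
        have h2 := Set.mem_iInter₂.mp this x hxB
        exact h2
      · obtain ⟨hne, ha⟩ := hσA x hxs hxB
        rw [← ha]
        exact mem_of_mem_nhds (ht ↑x)
end

section
/- Let X be a set with the discrete topology and let f : OnePoint X → OnePoint X be a map such that f(∞) = ∞ and f is injective on {x ∈ X : f x ≠ ∞}. Then f is continuous. (Consequently, every element of the Roelcke compactification of S(X), described as the closure of the extended permutations in the product topology on self-maps of OnePoint X, is a continuous self-map of OnePoint X, and this compactification is a semitopological semigroup.) -/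
open OnePoint Filter Topology

/-- Let `X` be a discrete space and `f : OnePoint X → OnePoint X` a map with `f ∞ = ∞`
which is injective on `{x ∈ X | f x ≠ ∞}`.  Then `f` is continuous.  (Hence every element
of the Roelcke compactification of `S(X)`, described as the closure of the extended
permutations in the product topology, is a continuous self-map of `OnePoint X`, and this
compactification is a semitopological semigroup.) -/
theorem stmt10 {X : Type*} [TopologicalSpace X] [DiscreteTopology X]
    (f : OnePoint X → OnePoint X) (hinf : f ∞ = ∞)
    (hinj : ∀ x y : X, x ≠ y → f ↑x ≠ ∞ → f ↑y ≠ ∞ → f ↑x ≠ f ↑y) :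
    Continuous f := by
  rw [continuous_iff_continuousAt]
  intro z
  cases z with
  | infty =>
    rw [OnePoint.continuousAt_infty]
    intro s hs
    rw [hinf] at hs
    obtain ⟨K, ⟨-, hKc⟩, hKs⟩ := (OnePoint.hasBasis_nhds_infty).mem_iff.mp hs
    have hKfin : K.Finite := hKc.finite_of_discrete
    -- the bad set
    set B : Set X := {x : X | f ↑x ∉ s} with hB
    have hBfin : B.Finite := by
      have : Set.InjOn (fun x : X => f ↑x) B := by
        intro x hx y hy hxy
        by_contra hne
        have hxK : f ↑x ≠ ∞ := fun h => hx (hKs (Set.mem_union_right _ (by simp [h])))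
        have hyK : f ↑y ≠ ∞ := fun h => hy (hKs (Set.mem_union_right _ (by simp [h])))
        exact hinj x y hne hxK hyK hxy
      have himg : (fun x : X => f ↑x) '' B ⊆ (↑) '' K := by
        rintro _ ⟨x, hx, rfl⟩
        have hxK : f ↑x ≠ ∞ := fun h => hx (hKs (Set.mem_union_right _ (by simp [h])))
        cases hfx : f ↑x with
        | infty => exact absurd hfx hxK
        | coe k =>
          refine ⟨k, ?_, hfx.symm⟩
          by_contra hk
          exact hx (hKs (Set.mem_union_left _ ⟨k, hk, hfx.symm⟩))
      exact Set.Finite.of_finite_image ((hKfin.image _).subset himg) this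
    refine ⟨B, hBfin.isClosed, hBfin.isCompact, ?_⟩
    intro x hx
    simpa [hB] using hx
  | coe x =>
    have hopen : IsOpen ((↑) '' ({x} : Set X) : Set (OnePoint X)) :=
      OnePoint.isOpen_image_coe.2 (isOpen_discrete _)
    rw [Set.image_singleton] at hopen
    have : 𝓝 ((↑x : OnePoint X)) = pure ↑x :=
      (isOpen_singleton_iff_nhds_eq_pure _).1 hopen
    rw [ContinuousAt, this]
    exact tendsto_pure_nhds _ _
end

section
/- Let X be a set and let G be a subgroup of the permutation group S(X) acting ultratransitively on X. Then for every finite subset σ of X there exists a finite set F ⊆ G such that every g ∈ G can be written as g = u ∘ f ∘ v with f ∈ F and u, v ∈ G fixing σ pointwise. Consequently, G with the topology of pointwise convergence is Roelcke precompact. -/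
open Finset

private theorem stmt13_key {X : Type*} (G : Subgroup (Equiv.Perm X))
    (hu : ∀ (n : ℕ) (x y : Fin n → X), Function.Injective x → Function.Injective y →
      ∃ g ∈ G, ∀ i, g (x i) = y i)
    (σ : Finset X) (f g : Equiv.Perm X) (hf : f ∈ G) (hg : g ∈ G)
    (h : ∀ s ∈ σ, ∀ t ∈ σ, f s = t ↔ g s = t) :
    ∃ u ∈ G, ∃ v ∈ G, (∀ x ∈ σ, u x = x) ∧ (∀ x ∈ σ, v x = x) ∧ g = u * f * v := by
  classical
  set D : Finset X := σ ∪ σ.image f with hD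
  set φ : X → X := fun a => if a ∈ σ then a else g (f⁻¹ a) with hφ
  have hφσ : ∀ a ∈ σ, φ a = a := fun a ha => by simp [hφ, ha]
  have hφf : ∀ s ∈ σ, φ (f s) = g s := by
    intro s hs
    by_cases hfs : f s ∈ σ
    · have hgs : g s = f s := (h s hs (f s) hfs).mp rfl
      simp only [hφ]
      rw [if_pos hfs]
      exact hgs.symm
    · simp [hφ, hfs]
  have hmem : ∀ a ∈ D, a ∈ σ ∨ ∃ s ∈ σ, f s = a := by
    intro a ha
    rcases Finset.mem_union.mp ha with h1 | h1
    · exact Or.inl h1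
    · right; simpa using Finset.mem_image.mp h1
  have hcross : ∀ a ∈ σ, ∀ b : X, b ∉ σ → (∃ s ∈ σ, f s = b) → φ a = φ b → a = b := by
    intro a haσ b hbσ hb hab
    obtain ⟨s, hs, hfs⟩ := hb
    rw [hφσ a haσ, ← hfs, hφf s hs] at hab
    have : f s = a := (h s hs a haσ).mpr hab.symm
    rw [← hfs, this]
  have hinj : ∀ a ∈ D, ∀ b ∈ D, φ a = φ b → a = b := by
    intro a ha b hb hab
    by_cases ha' : a ∈ σ <;> by_cases hb' : b ∈ σ
    · rwa [hφσ a ha', hφσ b hb'] at hab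
    · exact hcross a ha' b hb' ((hmem b hb).resolve_left hb') hab
    · exact (hcross b hb' a ha' ((hmem a ha).resolve_left ha') hab.symm).symm
    · have : g (f⁻¹ a) = g (f⁻¹ b) := by simpa [hφ, ha', hb'] using hab
      have := g.injective this
      simpa using f⁻¹.injective this
  obtain ⟨u, huG, hu'⟩ := hu D.card (fun i => ((D.equivFin.symm i : D) : X))
      (fun i => φ ((D.equivFin.symm i : D) : X))
      (fun i j hij => D.equivFin.symm.injective (Subtype.ext hij))
      (by
        intro i j hij
        have := hinj _ (D.equivFin.symm i).2 _ (D.equivFin.symm j).2 hij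
        exact D.equivFin.symm.injective (Subtype.ext this))
  have uD : ∀ a ∈ D, u a = φ a := by
    intro a ha
    simpa using hu' (D.equivFin ⟨a, ha⟩)
  have uσ : ∀ a ∈ σ, u a = a := by
    intro a ha
    rw [uD a (Finset.mem_union_left _ ha), hφσ a ha]
  have ufs : ∀ s ∈ σ, u (f s) = g s := by
    intro s hs
    rw [uD (f s) (Finset.mem_union_right _ (Finset.mem_image_of_mem f hs)), hφf s hs]
  refine ⟨u, huG, f⁻¹ * u⁻¹ * g, mul_mem (mul_mem (inv_mem hf) (inv_mem huG)) hg, uσ, ?_, ?_⟩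
  · intro s hs
    have : u⁻¹ (g s) = f s := by
      rw [← ufs s hs]; exact u.symm_apply_apply (f s)
    simp [Equiv.Perm.mul_apply, this]
  · group

/-- Let `G` be a subgroup of the permutation group `S(X)` acting ultratransitively on `X`.
Then for every finite `σ ⊆ X` there is a finite set `F ⊆ G` such that every `g ∈ G` can be
written as `g = u ∘ f ∘ v` with `f ∈ F` and `u, v ∈ G` fixing `σ` pointwise.  Consequently
`G` with the topology of pointwise convergence is Roelcke precompact. -/
theorem stmt13 {X : Type*} (G : Subgroup (Equiv.Perm X))
    (hu : ∀ (n : ℕ) (x y : Fin n → X), Function.Injective x → Function.Injective y →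
      ∃ g ∈ G, ∀ i, g (x i) = y i)
    (σ : Finset X) :
    ∃ F : Finset (Equiv.Perm X), (F : Set (Equiv.Perm X)) ⊆ (G : Set (Equiv.Perm X)) ∧
      ∀ g ∈ G, ∃ f ∈ F, ∃ u ∈ G, ∃ v ∈ G,
        (∀ x ∈ σ, u x = x) ∧ (∀ x ∈ σ, v x = x) ∧ g = u * f * v := by
  classical
  set tr : Equiv.Perm X → Finset (X × X) :=
    fun g => (σ ×ˢ σ).filter (fun p => g p.1 = p.2) with htr
  set rep : Finset (X × X) → Equiv.Perm X :=
    fun r => if h : ∃ f, f ∈ G ∧ tr f = r then h.choose else 1 with hrep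
  refine ⟨((σ ×ˢ σ).powerset).image rep, ?_, ?_⟩
  · intro f hf
    simp only [Finset.coe_image, Set.mem_image] at hf
    obtain ⟨r, hr, rfl⟩ := hf
    by_cases h : ∃ f, f ∈ G ∧ tr f = r
    · have : rep r = h.choose := dif_pos h
      rw [this]; exact h.choose_spec.1
    · have : rep r = 1 := dif_neg h
      rw [this]; exact G.one_mem
  · intro g hg
    have hr : tr g ∈ (σ ×ˢ σ).powerset := Finset.mem_powerset.mpr (Finset.filter_subset _ _)
    have hex : ∃ f, f ∈ G ∧ tr f = tr g := ⟨g, hg, rfl⟩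
    have hfdef : rep (tr g) = hex.choose := dif_pos hex
    set f := rep (tr g) with hfd
    have hfG : f ∈ G := by rw [hfdef]; exact hex.choose_spec.1
    have hfi : tr f = tr g := by rw [hfdef]; exact hex.choose_spec.2
    have hiff : ∀ s ∈ σ, ∀ t ∈ σ, f s = t ↔ g s = t := by
      intro s hs t ht
      constructor <;> intro h'
      · have hm : (s, t) ∈ tr f := by
          simp [htr, Finset.mem_filter, Finset.mem_product, hs, ht, h']
        rw [hfi] at hm
        exact (Finset.mem_filter.mp hm).2
      · have hm : (s, t) ∈ tr g := by
          simp [htr, Finset.mem_filter, Finset.mem_product, hs, ht, h']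
        rw [← hfi] at hm
        exact (Finset.mem_filter.mp hm).2
    obtain ⟨u, huG, v, hvG, h1, h2, h3⟩ := stmt13_key G hu σ f g hfG hg hiff
    exact ⟨f, Finset.mem_image.mpr ⟨tr g, hr, rfl⟩, u, huG, v, hvG, h1, h2, h3⟩
end

section
/- Let X be a linear order whose automorphism group Aut(X) acts ultratransitively on X. Then for every finite subset σ of X there exists a finite set F ⊆ Aut(X) such that every g ∈ Aut(X) can be written as g = u ∘ f ∘ v with f ∈ F and u, v order automorphisms of X fixing σ pointwise. Consequently, Aut(X) with the topology of pointwise convergence is Roelcke precompact. -/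
/-!
An automorphism `g` is determined, up to the two-sided action of the pointwise stabiliser
`St_σ`, by the order type of the tuple `(σ, g '' σ)`. Indeed, if `f` and `g` induce the same
order type, ultratransitivity gives `u` with `u ∘ f = g` on `σ` and `u = id` on `σ`; then
`v := f⁻¹ u⁻¹ g` also fixes `σ` and `g = u f v`. There are only finitely many order types on
`σ ⊕ σ`, so one representative for each of them gives `F`.
-/

def Ultratransitive (X : Type*) [LinearOrder X] : Prop :=
  ∀ (n : ℕ) (x y : Fin n → X), StrictMono x → StrictMono y → ∃ g : X ≃o X, ∀ i, g (x i) = y i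

namespace Ultratransitive

variable {X : Type*} [LinearOrder X]

theorem exists_eq_of_strictMonoOn (hu : Ultratransitive X) {T : Finset X} {φ : X → X}
    (hφ : StrictMonoOn φ T) : ∃ g : X ≃o X, ∀ x ∈ T, g x = φ x := by
  let e := T.orderIsoOfFin rfl
  obtain ⟨g, hg⟩ := hu T.card (fun i => e i) (fun i => φ (e i))
    (fun i j hij => by simpa using e.strictMono hij)
    (fun i j hij => hφ (e i).2 (e j).2 (by simpa using e.strictMono hij))
  refine ⟨g, fun x hx => ?_⟩
  simpa using hg (e.symm ⟨x, hx⟩)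

/-- Ultratransitivity for tuples with repetitions: only their order type matters. -/
theorem exists_comp_eq_of_le_iff (hu : Ultratransitive X) {ι : Type*} [Finite ι]
    {c c' : ι → X} (h : ∀ p q, c p ≤ c q ↔ c' p ≤ c' q) :
    ∃ g : X ≃o X, ∀ p, g (c p) = c' p := by
  classical
  have hlt : ∀ p q, c p < c q → c' p < c' q := fun p q => by
    simpa only [lt_iff_not_ge, h q p] using id
  have heq : ∀ p q, c p = c q → c' p = c' q := fun p q hpq =>
    le_antisymm ((h p q).1 hpq.le) ((h q p).1 hpq.ge)
  let φ : X → X := fun x => if hx : ∃ p, c p = x then c' hx.choose else x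
  have hφ : ∀ p, φ (c p) = c' p := fun p => by
    have hx : ∃ q, c q = c p := ⟨p, rfl⟩
    simpa only [φ, dif_pos hx] using heq _ _ hx.choose_spec
  have hmono : StrictMonoOn φ (Set.finite_range c).toFinset := by
    rintro _ hx _ hy hxy
    obtain ⟨p, rfl⟩ := (Set.finite_range c).mem_toFinset.1 hx
    obtain ⟨q, rfl⟩ := (Set.finite_range c).mem_toFinset.1 hy
    simpa only [hφ] using hlt p q hxy
  obtain ⟨g, hg⟩ := hu.exists_eq_of_strictMonoOn hmono
  exact ⟨g, fun p => (hg (c p) (by simp)).trans (hφ p)⟩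

end Ultratransitive

theorem exists_finset_forall_exists_mem_eq {G β : Type*} [Finite β] (P : G → β) :
    ∃ F : Finset G, ∀ g, ∃ f ∈ F, P f = P g := by
  classical
  have := Fintype.ofFinite (Set.range P)
  exact ⟨Finset.univ.image (Set.rangeSplitting P), fun g =>
    ⟨_, Finset.mem_image_of_mem _ (Finset.mem_univ ⟨P g, g, rfl⟩),
      Set.apply_rangeSplitting P _⟩⟩

/-- Let `X` be a linear order whose automorphism group `Aut(X) = X ≃o X` acts
ultratransitively on the chain `X`.  Then for every finite `σ ⊆ X` there is a finite set
`F` of order automorphisms such that every `g ∈ Aut(X)` can be written as `g = u ∘ f ∘ v`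
with `f ∈ F` and `u, v` order automorphisms fixing `σ` pointwise.  Consequently `Aut(X)`
with the topology of pointwise convergence is Roelcke precompact. -/
theorem stmt15 {X : Type*} [LinearOrder X]
    (hu : ∀ (n : ℕ) (x y : Fin n → X), StrictMono x → StrictMono y →
      ∃ g : X ≃o X, ∀ i, g (x i) = y i)
    (σ : Finset X) :
    ∃ F : Finset (X ≃o X), ∀ g : X ≃o X, ∃ f ∈ F, ∃ u v : X ≃o X,
      (∀ x ∈ σ, u x = x) ∧ (∀ x ∈ σ, v x = x) ∧ g = u * f * v := by
  let c : (X ≃o X) → σ ⊕ σ → X := fun g => Sum.elim (↑) (fun x => g x)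
  obtain ⟨F, hF⟩ := exists_finset_forall_exists_mem_eq fun g (p q : σ ⊕ σ) => c g p ≤ c g q
  refine ⟨F, fun g => ?_⟩
  obtain ⟨f, hfF, hfg⟩ := hF g
  obtain ⟨u, hcu⟩ := Ultratransitive.exists_comp_eq_of_le_iff hu (c := c f) (c' := c g)
    fun p q => iff_of_eq (congrFun₂ hfg p q)
  have hfix : ∀ x ∈ σ, u x = x := fun x hx => hcu (.inl ⟨x, hx⟩)
  have hcarry : ∀ x ∈ σ, u (f x) = g x := fun x hx => hcu (.inr ⟨x, hx⟩)
  refine ⟨f, hfF, u, f⁻¹ * u⁻¹ * g, hfix, fun x hx => ?_, by group⟩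
  change f.symm (u.symm (g x)) = x
  rw [← hcarry x hx, OrderIso.symm_apply_apply, OrderIso.symm_apply_apply]
end

section
/- Let H be a complex Hilbert space and let L be a finite-dimensional subspace of H with L ≠ H. Let S = {x ∈ H : ‖x‖ = 1} be the unit sphere of H and let P_L denote the orthogonal projection of H onto L. Then P_L maps S onto the closed unit ball B_L = {y ∈ L : ‖y‖ ≤ 1} of L, and the restriction P_L|_S : S → B_L is an open map: the image of every relatively open subset of S is relatively open in B_L. -/
/-!
For a unit vector `e ⊥ L`, the map `y ↦ y + √(1 - ‖y‖²) e` is a continuous section of the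
projection `P_L` over the closed unit ball `B_L`, with values in the unit sphere `S`. Conversely,
every `x ∈ S` is of this form: `x - P_L x ⊥ L` has norm `√(1 - ‖P_L x‖²)` by Pythagoras, so it is a
nonnegative multiple of a unit vector `e ⊥ L` (any one, if `x ∈ L`).
Hence `P_L (U ∩ S)` is `B_L` intersected with the union over all such `e` of the preimages of `U`
under these sections, which is open when `U` is.
-/

open Metric
open scoped InnerProductSpace

namespace Submodule

section NormedSpace

variable {𝕜 E : Type*} [RCLike 𝕜] [NormedAddCommGroup E] [NormedSpace 𝕜 E] {M : Submodule 𝕜 E}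

theorem exists_mem_norm_eq_one (hM : M ≠ ⊥) : ∃ e ∈ M, ‖e‖ = 1 := by
  obtain ⟨v, hv, hv₀⟩ := M.exists_mem_ne_zero_of_ne_bot hM
  exact ⟨((‖v‖⁻¹ : ℝ) : 𝕜) • v, M.smul_mem _ hv, by simp [norm_smul, hv₀]⟩

theorem exists_norm_eq_one_smul_eq (hM : M ≠ ⊥) {z : E} (hz : z ∈ M) :
    ∃ e ∈ M, ‖e‖ = 1 ∧ ((‖z‖ : ℝ) : 𝕜) • e = z := by
  by_cases hz₀ : z = 0
  · obtain ⟨e, he, he₁⟩ := exists_mem_norm_eq_one hM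
    exact ⟨e, he, he₁, by simp [hz₀]⟩
  · refine ⟨((‖z‖⁻¹ : ℝ) : 𝕜) • z, M.smul_mem _ hz, by simp [norm_smul, hz₀], ?_⟩
    rw [smul_smul, ← RCLike.ofReal_mul, mul_inv_cancel₀ (norm_ne_zero_iff.2 hz₀),
      RCLike.ofReal_one, one_smul]

end NormedSpace

variable {𝕜 E : Type*} [RCLike 𝕜] [NormedAddCommGroup E] [InnerProductSpace 𝕜 E]
  (K : Submodule 𝕜 E)

noncomputable def sphereLift (e : E) (y : K) : E :=
  y + ((√(1 - ‖y‖ ^ 2) : ℝ) : 𝕜) • e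

theorem continuous_sphereLift (e : E) : Continuous (K.sphereLift e) := by
  unfold sphereLift
  fun_prop

variable {K}

theorem norm_sphereLift {e : E} (he : e ∈ Kᗮ) (he₁ : ‖e‖ = 1) {y : K} (hy : ‖y‖ ≤ 1) :
    ‖K.sphereLift e y‖ = 1 := by
  have horth : ⟪(y : E), ((√(1 - ‖y‖ ^ 2) : ℝ) : 𝕜) • e⟫_𝕜 = 0 :=
    inner_right_of_mem_orthogonal y.2 (Kᗮ.smul_mem _ he)
  have hsq : ‖K.sphereLift e y‖ ^ 2 = 1 := by
    rw [sphereLift, sq, norm_add_sq_eq_norm_sq_add_norm_sq_of_inner_eq_zero _ _ horth,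
      norm_smul, RCLike.norm_ofReal, he₁, mul_one, abs_of_nonneg (Real.sqrt_nonneg _),
      Real.mul_self_sqrt (by nlinarith [norm_nonneg y]), norm_coe]
    ring
  exact (pow_eq_one_iff_of_nonneg (norm_nonneg _) two_ne_zero).1 hsq

theorem orthogonalProjectionOnto_sphereLift [K.HasOrthogonalProjection] {e : E} (he : e ∈ Kᗮ)
    (y : K) : K.orthogonalProjectionOnto (K.sphereLift e y) = y := by
  rw [sphereLift, map_add, orthogonalProjectionOnto_mem_subspace_eq_self,
    orthogonalProjectionOnto_apply_of_mem_orthogonal (Kᗮ.smul_mem _ he), add_zero]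

theorem exists_sphereLift_orthogonalProjectionOnto_eq [K.HasOrthogonalProjection] (hK : K ≠ ⊤)
    {x : E} (hx : ‖x‖ = 1) :
    ∃ e ∈ Kᗮ, ‖e‖ = 1 ∧ K.sphereLift e (K.orthogonalProjectionOnto x) = x := by
  obtain ⟨e, he, he₁, hze⟩ := exists_norm_eq_one_smul_eq (mt orthogonal_eq_bot_iff.1 hK)
    (K.sub_starProjection_mem_orthogonal x)
  have hpyth := K.norm_sq_eq_add_norm_sq_starProjection x
  rw [starProjection_orthogonal_val, hx] at hpyth
  simp only [starProjection_apply, norm_coe] at hpyth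
  have hz : ‖x - K.starProjection x‖ = √(1 - ‖K.orthogonalProjectionOnto x‖ ^ 2) := by
    rw [← Real.sqrt_sq (norm_nonneg _), starProjection_apply]
    congr 1
    linarith
  refine ⟨e, he, he₁, ?_⟩
  rw [sphereLift, ← hz, hze, ← starProjection_apply, add_sub_cancel]

theorem orthogonalProjectionOnto_image_inter_sphere [K.HasOrthogonalProjection] (hK : K ≠ ⊤)
    (U : Set E) :
    K.orthogonalProjectionOnto '' (U ∩ sphere 0 1) =
      (⋃ e ∈ {e | e ∈ Kᗮ ∧ ‖e‖ = 1}, K.sphereLift e ⁻¹' U) ∩ closedBall 0 1 := by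
  ext y
  simp only [Set.mem_image, Set.mem_inter_iff, mem_sphere_zero_iff_norm, mem_closedBall_zero_iff,
    Set.mem_iUnion, Set.mem_preimage, Set.mem_ofPred_eq, exists_prop]
  constructor
  · rintro ⟨x, ⟨hxU, hx⟩, rfl⟩
    obtain ⟨e, he, he₁, hlift⟩ := exists_sphereLift_orthogonalProjectionOnto_eq hK hx
    exact ⟨⟨e, ⟨he, he₁⟩, by rwa [hlift]⟩,
      hx ▸ K.norm_orthogonalProjectionOnto_apply_le x⟩
  · rintro ⟨⟨e, ⟨he, he₁⟩, hU⟩, hy⟩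
    exact ⟨K.sphereLift e y, ⟨hU, norm_sphereLift he he₁ hy⟩,
      orthogonalProjectionOnto_sphereLift he y⟩

end Submodule

theorem stmt17_general {H : Type*} [NormedAddCommGroup H] [InnerProductSpace ℂ H]
    (L : Submodule ℂ H) [FiniteDimensional ℂ L] (hL : L ≠ ⊤) :
    (⇑(Submodule.orthogonalProjectionOnto L)) '' Metric.sphere (0 : H) 1 = Metric.closedBall (0 : L) 1 ∧
    ∀ U : Set H, IsOpen U → ∃ V : Set L, IsOpen V ∧
      (⇑(Submodule.orthogonalProjectionOnto L)) '' (U ∩ Metric.sphere (0 : H) 1) =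
        V ∩ Metric.closedBall (0 : L) 1 := by
  refine ⟨?_, fun U hU => ⟨_, isOpen_biUnion fun e _ => hU.preimage (L.continuous_sphereLift e),
    L.orthogonalProjectionOnto_image_inter_sphere hL U⟩⟩
  obtain ⟨e, he, he₁⟩ := Submodule.exists_mem_norm_eq_one (mt Submodule.orthogonal_eq_bot_iff.1 hL)
  have hunion : (⋃ e ∈ {e | e ∈ Lᗮ ∧ ‖e‖ = 1}, L.sphereLift e ⁻¹' Set.univ) = Set.univ :=
    Set.eq_univ_of_forall fun _ => Set.mem_biUnion ⟨he, he₁⟩ trivial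
  simpa only [Set.univ_inter, hunion] using
    L.orthogonalProjectionOnto_image_inter_sphere hL Set.univ

/-- Let `H` be a complex Hilbert space and `L` a finite-dimensional subspace with `L ≠ H`.
The orthogonal projection `P_L` maps the unit sphere `S` of `H` onto the closed unit ball
of `L`, and the restriction `P_L|_S : S → B_L` is an open map: the image of any relatively
open subset of `S` is relatively open in `B_L`. -/
theorem stmt17 {H : Type*} [NormedAddCommGroup H] [InnerProductSpace ℂ H] [CompleteSpace H]
    (L : Submodule ℂ H) [FiniteDimensional ℂ L] (hL : L ≠ ⊤) :
    (⇑(Submodule.orthogonalProjectionOnto L)) '' Metric.sphere (0 : H) 1 = Metric.closedBall (0 : L) 1 ∧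
    ∀ U : Set H, IsOpen U → ∃ V : Set L, IsOpen V ∧
      (⇑(Submodule.orthogonalProjectionOnto L)) '' (U ∩ Metric.sphere (0 : H) 1) =
        V ∩ Metric.closedBall (0 : L) 1 :=
  stmt17_general L hL
end
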